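/- arXiv:2307.13421 — 2 statements merged into one kernel-verified Lean document; each statement's English description precedes it below -/
import Mathlib

section
/- (Theorem 1, soft attention.) In the linear-orthogonal setting, fix α ∈ [0,1] and let μ : [0,∞) → ℝ be differentiable with μ(0) = 0 and μ'(t) = α / ( exp(α μ(t)) + C − 1 ) for all t ≥ 0. Then for every t ≥ 0 the fixed-focus soft-attention population loss L^{FF,SA}_α is Fréchet differentiable at W(t) := μ(t) D and (d/dt) W(t) = −∇ L^{FF,SA}_α(W(t)); that is, t ↦ μ(t) D is a gradient-flow trajectory of L^{FF,SA}_α started from the zero matrix, and each row of W(t) equals μ(t) ( s_k − (1/C) Σ_{k'=1}^C s_{k'} ). -/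
open scoped RealInnerProductSpace BigOperators
open MeasureTheory

/-- Softmax of a finite family of reals. -/
noncomputable def softmax {ι : Type*} [Fintype ι] (z : ι → ℝ) (k : ι) : ℝ :=
  Real.exp (z k) / ∑ l, Real.exp (z l)

/-!
At `W = a • D` every logit `⟪W i, α • s y + β • ∑ j, b j⟫` equals `α a (δ_{iy} - 1/C)` for almost
every context `b`, because the context tokens are orthogonal to all the `s k`. The softmax residual
`softmax - e_y` is then deterministic, namely `(1 - C δ_{iy}) / (exp (α a) + C - 1)`, so
differentiating under the integral (the per-sample gradient `(softmax - e_y) vᵀ` is dominated by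
`2 ‖v‖`) turns the gradient of each class term into that residual times the mean feature `α s_y`.
Averaging over `y` gives `-(α / (exp (α a) + C - 1)) • D`, which at `a = μ t` is `-μ'(t) • D`.
-/

open Finset

section Softmax

variable {ι : Type*} [Fintype ι] [Nonempty ι]

lemma sum_exp_pos (z : ι → ℝ) : 0 < ∑ l, Real.exp (z l) :=
  sum_pos (fun _ _ => Real.exp_pos _) univ_nonempty

lemma softmax_nonneg (z : ι → ℝ) (k : ι) : 0 ≤ softmax z k :=
  div_nonneg (Real.exp_pos _).le (sum_exp_pos z).le

lemma sum_softmax (z : ι → ℝ) : ∑ k, softmax z k = 1 := by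
  simp only [softmax, ← sum_div, div_self (sum_exp_pos z).ne']

lemma neg_log_softmax (z : ι → ℝ) (y : ι) :
    -Real.log (softmax z y) = Real.log (∑ l, Real.exp (z l)) - z y := by
  rw [softmax, Real.log_div (Real.exp_pos _).ne' (sum_exp_pos z).ne', Real.log_exp]
  ring

lemma continuous_neg_log_softmax (y : ι) :
    Continuous fun z : ι → ℝ => -Real.log (softmax z y) := by
  simp only [neg_log_softmax]
  exact ((continuous_finsetSum _ fun l _ => (continuous_apply l).rexp).log
    fun z => (sum_exp_pos z).ne').sub (continuous_apply y)

lemma sum_abs_softmax_sub_single_le [DecidableEq ι] (z : ι → ℝ) (y : ι) :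
    ∑ i, |(softmax z - Pi.single y 1 : ι → ℝ) i| ≤ 2 := by
  calc ∑ i, |(softmax z - Pi.single y 1 : ι → ℝ) i|
      ≤ ∑ i, (softmax z i + (Pi.single y 1 : ι → ℝ) i) := by
        gcongr with i
        have hz := softmax_nonneg z i
        have hy : (0 : ℝ) ≤ (Pi.single y 1 : ι → ℝ) i := by by_cases h : i = y <;> simp [h]
        exact (abs_sub _ _).trans_eq (by rw [abs_of_nonneg hz, abs_of_nonneg hy])
    _ = 2 := by rw [sum_add_distrib, sum_softmax, sum_pi_single', if_pos (mem_univ y)]; norm_num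

lemma softmax_centered_single_sub_single [DecidableEq ι] (a : ℝ) (y : ι) :
    (softmax (fun i => a * ((Pi.single y 1 : ι → ℝ) i - (Fintype.card ι : ℝ)⁻¹))
        - Pi.single y 1 : ι → ℝ)
      = fun i => (1 - Fintype.card ι * (Pi.single y 1 : ι → ℝ) i)
          / (Real.exp a + Fintype.card ι - 1) := by
  have hexp : ∀ i, Real.exp (a * ((Pi.single y 1 : ι → ℝ) i - (Fintype.card ι : ℝ)⁻¹))
      = (1 + (Real.exp a - 1) * (Pi.single y 1 : ι → ℝ) i)
          * Real.exp (-(a * (Fintype.card ι : ℝ)⁻¹)) := by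
    intro i
    rw [mul_sub, sub_eq_add_neg, Real.exp_add]
    by_cases h : i = y <;> simp [h]
  have hsum : ∑ i, (1 + (Real.exp a - 1) * (Pi.single y 1 : ι → ℝ) i)
      = Real.exp a + Fintype.card ι - 1 := by
    simp only [sum_add_distrib, sum_const, card_univ, nsmul_eq_mul, mul_one, ← mul_sum,
      sum_pi_single', mem_univ, if_true]
    ring
  have hS : Real.exp a + Fintype.card ι - 1 ≠ 0 := by
    have : (1 : ℝ) ≤ Fintype.card ι := by exact_mod_cast Fintype.card_pos
    have := Real.exp_pos a
    linarith
  funext i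
  simp only [Pi.sub_apply, softmax, hexp, ← sum_mul, hsum]
  rw [mul_div_mul_right _ _ (Real.exp_ne_zero _)]
  field_simp
  rw [Pi.single_apply]
  split_ifs <;> ring

end Softmax

section OuterProduct

variable {ι E : Type*} [NormedAddCommGroup E] [InnerProductSpace ℝ E]

/-- The matrix `c vᵀ`, as the family of its rows `c i • v`. -/
noncomputable def outerProduct (c : ι → ℝ) : E →L[ℝ] PiLp 2 fun _ : ι => E :=
  (PiLp.continuousLinearEquiv 2 ℝ fun _ : ι => E).symm.toContinuousLinearMap.comp
    (ContinuousLinearMap.pi fun i => c i • ContinuousLinearMap.id ℝ E)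

@[simp] lemma outerProduct_apply (c : ι → ℝ) (v : E) (i : ι) :
    outerProduct c v i = c i • v := rfl

variable [Fintype ι]

lemma inner_outerProduct (c : ι → ℝ) (v : E) (U : PiLp 2 fun _ : ι => E) :
    ⟪outerProduct c v, U⟫ = ∑ i, c i * ⟪v, U i⟫ := by
  simp [PiLp.inner_apply, real_inner_smul_left]

lemma norm_outerProduct_le (c : ι → ℝ) (v : E) : ‖outerProduct c v‖ ≤ (∑ i, |c i|) * ‖v‖ := by
  refine le_of_pow_le_pow_left₀ two_ne_zero (by positivity) ?_
  calc ‖outerProduct c v‖ ^ 2 = (∑ i, |c i| ^ 2) * ‖v‖ ^ 2 := by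
        simp [PiLp.norm_sq_eq_of_L2, norm_smul, mul_pow, sum_mul]
    _ ≤ ((∑ i, |c i|) * ‖v‖) ^ 2 := by
        rw [mul_pow]
        gcongr
        exact sum_sq_le_sq_sum_of_nonneg fun i _ => abs_nonneg (c i)

end OuterProduct

section CrossEntropyGradient

variable {ι E : Type*} [Fintype ι] [Nonempty ι] [DecidableEq ι]
  [NormedAddCommGroup E] [InnerProductSpace ℝ E] [CompleteSpace E]

theorem hasGradientAt_neg_log_softmax_inner (v : E) (y : ι) (W : PiLp 2 fun _ : ι => E) :
    HasGradientAt (fun W : PiLp 2 (fun _ : ι => E) => -Real.log (softmax (fun i => ⟪W i, v⟫) y))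
      (outerProduct (softmax (fun i => ⟪W i, v⟫) - Pi.single y 1) v) W := by
  have hlogit : ∀ i, HasFDerivAt (fun W : PiLp 2 (fun _ : ι => E) => ⟪W i, v⟫)
      ((innerSL ℝ v).comp (PiLp.proj 2 (fun _ : ι => E) i)) W := fun i => by
    convert ((innerSL ℝ v).comp (PiLp.proj 2 (fun _ : ι => E) i)).hasFDerivAt using 1
    exact funext fun W => real_inner_comm _ _
  have hlse := (HasFDerivAt.fun_sum fun l _ => (hlogit l).exp).log (sum_exp_pos _).ne'
  rw [hasGradientAt_iff_hasFDerivAt]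
  simp_rw [neg_log_softmax]
  refine (hlse.sub (hlogit y)).congr_fderiv ?_
  ext U
  simp [inner_outerProduct, softmax, sub_mul, sum_sub_distrib, div_mul_eq_mul_div, ← sum_div,
    Pi.single_apply, inv_mul_eq_div]

theorem hasGradientAt_integral_neg_log_softmax_inner {Ω : Type*} [MeasurableSpace Ω]
    {π : Measure Ω} [IsFiniteMeasure π] {v : Ω → E} (hv : Integrable v π) (y : ι)
    {W : PiLp 2 fun _ : ι => E} {z : ι → ℝ} (hz : ∀ᵐ ω ∂π, (fun i => ⟪W i, v ω⟫) = z) :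
    HasGradientAt
      (fun W : PiLp 2 (fun _ : ι => E) => ∫ ω, -Real.log (softmax (fun i => ⟪W i, v ω⟫) y) ∂π)
      (outerProduct (softmax z - Pi.single y 1) (∫ ω, v ω ∂π)) W := by
  set c := softmax z - Pi.single y 1
  have hc_int := (outerProduct c).integrable_comp hv
  -- `toDual` is conjugate-linear, hence the semilinear form of `integral_comp_comm`.
  have hcomm : InnerProductSpace.toDual ℝ _ (∫ ω, outerProduct c (v ω) ∂π)
      = ∫ ω, InnerProductSpace.toDual ℝ _ (outerProduct c (v ω)) ∂π :=
    ((InnerProductSpace.toDual ℝ (PiLp 2 fun _ : ι => E)).toContinuousLinearEquiv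
      |>.toContinuousLinearMap.integral_comp_commSL (by simp) hc_int).symm
  have hF'_ae : (fun ω => InnerProductSpace.toDual ℝ _
        (outerProduct (softmax (fun i => ⟪W i, v ω⟫) - Pi.single y 1) (v ω)))
      =ᵐ[π] fun ω => InnerProductSpace.toDual ℝ _ (outerProduct c (v ω)) := by
    filter_upwards [hz] with ω hω
    rw [hω]
  rw [hasGradientAt_iff_hasFDerivAt, ← ContinuousLinearMap.integral_comp_comm _ hv, hcomm,
    ← integral_congr_ae hF'_ae]
  refine hasFDerivAt_integral_of_dominated_of_fderiv_le (bound := fun ω => 2 * ‖v ω‖)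
    (F := fun W ω => -Real.log (softmax (fun i => ⟪W i, v ω⟫) y))
    (F' := fun W ω => (InnerProductSpace.toDual ℝ _
      (outerProduct (softmax (fun i => ⟪W i, v ω⟫) - Pi.single y 1) (v ω)) :
        (PiLp 2 fun _ : ι => E) →L[ℝ] ℝ))
    (Metric.ball_mem_nhds W one_pos) ?_ ?_ ?_ ?_ (hv.norm.const_mul 2) ?_
  · refine Filter.Eventually.of_forall fun W' => ?_
    have hlogits : Continuous fun u : E => fun i => ⟪W' i, u⟫ :=
      continuous_pi fun i => continuous_const.inner continuous_id
    exact ((continuous_neg_log_softmax y).comp hlogits).comp_aestronglyMeasurable hv.1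
  · refine (integrable_const (-Real.log (softmax z y))).congr ?_
    filter_upwards [hz] with ω hω
    rw [hω]
  · exact ((InnerProductSpace.toDual ℝ _).continuous.comp_aestronglyMeasurable hc_int.1).congr
      hF'_ae.symm
  · refine Filter.Eventually.of_forall fun ω W' _ => ?_
    rw [LinearIsometryEquiv.norm_map]
    exact (norm_outerProduct_le _ _).trans
      (mul_le_mul_of_nonneg_right (sum_abs_softmax_sub_single_le _ y) (norm_nonneg _))
  · exact Filter.Eventually.of_forall fun ω W' _ =>
      hasGradientAt_neg_log_softmax_inner (v ω) y W'

end CrossEntropyGradient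

lemma integral_sum_eval_pi {J E : Type*} [Fintype J] [NormedAddCommGroup E] [NormedSpace ℝ E]
    [MeasurableSpace E] {ρ : Measure E} [IsProbabilityMeasure ρ] (hρ : Integrable (fun x => x) ρ) :
    ∫ b, ∑ j, b j ∂(Measure.pi fun _ : J => ρ) = Fintype.card J • ∫ x, x ∂ρ := by
  rw [integral_finsetSum (f := fun j (b : J → E) => b j) _ fun j _ => integrable_eval hρ]
  simp [integral_comp_eval (μ := fun _ : J => ρ) (f := fun x : E => x) hρ.1]

section FocusedAttention

variable {ι E : Type*} [Fintype ι] [DecidableEq ι] [NormedAddCommGroup E] [InnerProductSpace ℝ E]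

lemma Orthonormal.inner_sub_mean_smul_add {s : ι → E} (hs : Orthonormal ℝ s) {x : E}
    (hx : ∀ k, ⟪x, s k⟫ = 0) (α : ℝ) (i y : ι) :
    ⟪s i - (Fintype.card ι : ℝ)⁻¹ • ∑ k, s k, α • s y + x⟫
      = α * ((Pi.single y 1 : ι → ℝ) i - (Fintype.card ι : ℝ)⁻¹) := by
  have hx' : ∀ k, ⟪s k, x⟫ = 0 := fun k => by rw [real_inner_comm, hx]
  simp [inner_add_right, inner_sub_left, real_inner_smul_left, real_inner_smul_right, sum_inner,
    hx', orthonormal_iff_ite.mp hs, Pi.single_apply, eq_comm]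
  split_ifs <;> ring

lemma inv_card_smul_sum_outerProduct [Nonempty ι] {s : ι → E} {D : PiLp 2 fun _ : ι => E}
    (hD : ∀ k, D k = s k - (Fintype.card ι : ℝ)⁻¹ • ∑ k', s k') (α S : ℝ) :
    (Fintype.card ι : ℝ)⁻¹ • ∑ y, outerProduct
        (fun i => (1 - Fintype.card ι * (Pi.single y 1 : ι → ℝ) i) / S) (α • s y)
      = -(α / S) • D := by
  ext i
  have hC : (Fintype.card ι : ℝ) ≠ 0 := Nat.cast_ne_zero.2 Fintype.card_ne_zero
  simp only [PiLp.smul_apply, WithLp.ofLp_sum, Finset.sum_apply, outerProduct_apply, hD,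
    Pi.single_apply, mul_ite, mul_one, mul_zero, sub_div, sub_smul, ite_div, ite_smul, zero_div,
    zero_smul, smul_sub, sum_sub_distrib, sum_ite_eq, mem_univ, if_true, ← smul_sum]
  match_scalars <;> field_simp

variable {J : Type*} [Fintype J] [MeasurableSpace E]

lemma ae_inner_smul_centered_eq {s : ι → E} (hs : Orthonormal ℝ s) {ρ : Measure E}
    [SigmaFinite ρ] (hρ_orth : ∀ᵐ x ∂ρ, ∀ k, ⟪x, s k⟫ = 0) {D : PiLp 2 fun _ : ι => E}
    (hD : ∀ k, D k = s k - (Fintype.card ι : ℝ)⁻¹ • ∑ k', s k') (α β a : ℝ) (y : ι) :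
    ∀ᵐ b ∂(Measure.pi fun _ : J => ρ), (fun i => ⟪(a • D) i, α • s y + β • ∑ j, b j⟫)
      = fun i => (α * a) * ((Pi.single y 1 : ι → ℝ) i - (Fintype.card ι : ℝ)⁻¹) := by
  have horth : ∀ᵐ b ∂(Measure.pi fun _ : J => ρ), ∀ j k, ⟪b j, s k⟫ = 0 :=
    ae_all_iff.2 fun j =>
      (Measure.tendsto_eval_ae_ae (μ := fun _ : J => ρ) (i := j)).eventually hρ_orth
  filter_upwards [horth] with b hb
  funext i
  have hx : ∀ k, ⟪β • ∑ j, b j, s k⟫ = 0 := fun k => by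
    simp [real_inner_smul_left, sum_inner, hb]
  rw [PiLp.smul_apply, hD, real_inner_smul_left, hs.inner_sub_mean_smul_add hx]
  ring

theorem hasGradientAt_fixedFocusLoss_smul_centered [Nonempty ι] [CompleteSpace E]
    {s : ι → E} (hs : Orthonormal ℝ s) {ρ : Measure E} [IsProbabilityMeasure ρ]
    (hρ_int : Integrable (fun x => x) ρ) (hρ_mean : ∫ x, x ∂ρ = 0)
    (hρ_orth : ∀ᵐ x ∂ρ, ∀ k, ⟪x, s k⟫ = 0) (α β a : ℝ) {D : PiLp 2 fun _ : ι => E}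
    (hD : ∀ k, D k = s k - (Fintype.card ι : ℝ)⁻¹ • ∑ k', s k') :
    HasGradientAt (fun W : PiLp 2 (fun _ : ι => E) => (Fintype.card ι : ℝ)⁻¹ * ∑ y,
        ∫ b : J → E, -Real.log (softmax (fun i => ⟪W i, α • s y + β • ∑ j, b j⟫) y)
          ∂(Measure.pi fun _ => ρ))
      (-(α / (Real.exp (α * a) + Fintype.card ι - 1)) • D) (a • D) := by
  set S := Real.exp (α * a) + Fintype.card ι - 1
  set π := Measure.pi fun _ : J => ρ
  have hsum_int : Integrable (fun b : J → E => ∑ j, b j) π :=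
    integrable_finsetSum _ fun j _ => integrable_eval hρ_int
  have hfeature_int : ∀ y, Integrable (fun b : J → E => α • s y + β • ∑ j, b j) π :=
    fun y => (integrable_const _).add (hsum_int.smul β)
  have hfeature_mean : ∀ y, ∫ b, α • s y + β • ∑ j, b j ∂π = α • s y := fun y => by
    rw [integral_add (f := fun _ => α • s y) (g := fun b : J → E => β • ∑ j, b j)
      (integrable_const _) (hsum_int.smul β)]
    have hsum_mean : ∫ b, ∑ j, b j ∂π = 0 :=
      (integral_sum_eval_pi hρ_int).trans (by rw [hρ_mean, smul_zero])
    simp [integral_smul, hsum_mean]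
  have hgrad : ∀ y, HasGradientAt (fun W : PiLp 2 (fun _ : ι => E) =>
        ∫ b, -Real.log (softmax (fun i => ⟪W i, α • s y + β • ∑ j, b j⟫) y) ∂π)
      (outerProduct (fun i => (1 - Fintype.card ι * (Pi.single y 1 : ι → ℝ) i) / S) (α • s y))
      (a • D) := fun y => by
    simpa only [hfeature_mean, softmax_centered_single_sub_single] using
      hasGradientAt_integral_neg_log_softmax_inner (hfeature_int y) y
        (ae_inner_smul_centered_eq hs hρ_orth hD α β a y)
  rw [← inv_card_smul_sum_outerProduct hD]
  simp only [hasGradientAt_iff_hasFDerivAt] at hgrad ⊢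
  rw [map_smulₛₗ, map_sum, conj_trivial]
  exact (HasFDerivAt.fun_sum fun y _ => hgrad y).const_mul _

end FocusedAttention

set_option maxHeartbeats 1000000 in
set_option synthInstance.maxHeartbeats 1000000 in
/-- Theorem 1, soft attention: in the linear-orthogonal setting, `t ↦ μ(t) D`
is a gradient-flow trajectory (from the zero matrix) of the fixed-focus soft-attention
population loss, where `μ' = α / (exp(α μ) + C − 1)`. -/
theorem fixed_focus_soft_attention_gradient_flow
    (d C m : ℕ) (hd : 1 ≤ d) (hC : 2 ≤ C) (hm : 2 ≤ m)
    (s : Fin C → EuclideanSpace ℝ (Fin d)) (hs : Orthonormal ℝ s)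
    (ρ : Measure (EuclideanSpace ℝ (Fin d))) [IsProbabilityMeasure ρ]
    (hρ_int : Integrable (fun x => x) ρ)
    (hρ_mean : ∫ x, x ∂ρ = 0)
    (hρ_orth : ∀ᵐ x ∂ρ, ∀ k, ⟪x, s k⟫ = 0)
    (α : ℝ) (hα : α ∈ Set.Icc (0 : ℝ) 1)
    (D : PiLp 2 fun _ : Fin C => EuclideanSpace ℝ (Fin d))
    (hD : ∀ k, D k = s k - (C : ℝ)⁻¹ • ∑ k', s k')
    (μ : ℝ → ℝ) (hμ0 : μ 0 = 0)
    (hμ : ∀ t, 0 ≤ t → HasDerivAt μ (α / (Real.exp (α * μ t) + C - 1)) t)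
    (L : (PiLp 2 fun _ : Fin C => EuclideanSpace ℝ (Fin d)) → ℝ)
    (hL : ∀ W, L W = (C : ℝ)⁻¹ * ∑ y : Fin C,
      ∫ b : Fin (m - 1) → EuclideanSpace ℝ (Fin d),
        -Real.log (softmax (fun i =>
          ⟪W i, α • s y + ((1 - α) / ((m : ℝ) - 1)) • ∑ j, b j⟫) y)
        ∂(Measure.pi fun _ => ρ)) :
    ∀ t, 0 ≤ t → ∃ g, HasGradientAt L g (μ t • D) ∧
      HasDerivAt (fun τ => μ τ • D) (-g) t ∧
      ∀ k, (μ t • D) k = μ t • (s k - (C : ℝ)⁻¹ • ∑ k', s k') := by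
  intro t ht
  have : Nonempty (Fin C) := ⟨⟨0, by omega⟩⟩
  have hgrad := hasGradientAt_fixedFocusLoss_smul_centered (J := Fin (m - 1)) hs hρ_int hρ_mean
    hρ_orth α ((1 - α) / ((m : ℝ) - 1)) (μ t) (by simpa only [Fintype.card_fin] using hD)
  simp only [Fintype.card_fin, ← hL] at hgrad
  refine ⟨_, hgrad, ?_, fun k => by rw [PiLp.smul_apply, hD]⟩
  simpa only [neg_smul, neg_neg] using (hμ t ht).smul_const D
end

section
/- In the linear-orthogonal setting, for every α ∈ [0,1] and every μ ∈ ℝ, the fixed-focus hard-attention population loss along the ansatz direction satisfies L^{FF,HA}_α( μ D ) = α log( 1 + (C−1) exp(−μ) ) + (1−α) log C. Consequently, lim_{μ→∞} L^{FF,HA}_α( μ D ) = (1−α) log C, which is strictly positive whenever α < 1; the hard-attention fixed-focus loss flattens at a value bounded away from 0 for any α < 1. -/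
/-!
Along `μ D` the logits of a signal token `s_y` are `μ (1 - 1/C)` for the true class and `-μ/C`
for the others, so its softmax probability is `(1 + (C - 1) e^{-μ})⁻¹`. A noise token is
orthogonal to every `s_k`, hence to every row of `D`: all its logits vanish, its softmax is
uniform, and it contributes `log C` to the loss whatever `μ` is.
-/

open scoped RealInnerProductSpace BigOperators
open MeasureTheory Filter

open Real Finset

theorem softmax_const {ι : Type*} [Fintype ι] (c : ℝ) (k : ι) :
    softmax (fun _ => c) k = (Fintype.card ι : ℝ)⁻¹ := by
  have : (Fintype.card ι : ℝ) ≠ 0 := Nat.cast_ne_zero.mpr (Fintype.card_pos_iff.mpr ⟨k⟩).ne'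
  simp only [softmax, sum_const, card_univ, nsmul_eq_mul]
  field_simp

theorem softmax_ite_self {ι : Type*} [Fintype ι] [DecidableEq ι] (y : ι) (a b : ℝ) :
    softmax (fun i => if i = y then a else b) y
      = (1 + (Fintype.card ι - 1) * exp (b - a))⁻¹ := by
  have hrest : ∑ i ∈ univ.erase y, exp (if i = y then a else b)
      = (Fintype.card ι - 1) * exp b := by
    rw [sum_congr rfl fun i hi => by rw [if_neg (ne_of_mem_erase hi)], sum_const,
      card_erase_of_mem (mem_univ y), card_univ, nsmul_eq_mul,
      Nat.cast_sub (Fintype.card_pos_iff.mpr ⟨y⟩), Nat.cast_one]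
  rw [softmax, ← add_sum_erase univ _ (mem_univ y), hrest, if_pos rfl, exp_sub]
  field_simp

theorem tendsto_log_one_add_mul_exp_neg (c : ℝ) :
    Tendsto (fun μ => log (1 + c * exp (-μ))) atTop (nhds 0) := by
  simpa using ((tendsto_exp_neg_atTop_nhds_zero.const_mul c).const_add 1).log (by simp)

section AnsatzDirection

variable {ι E : Type*} [Fintype ι] [NormedAddCommGroup E] [InnerProductSpace ℝ E]

noncomputable def ansatzDirection (s : ι → E) (k : ι) : E :=
  s k - (Fintype.card ι : ℝ)⁻¹ • ∑ k', s k'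

theorem inner_ansatzDirection_left [DecidableEq ι] {s : ι → E} (hs : Orthonormal ℝ s)
    (i y : ι) :
    ⟪ansatzDirection s i, s y⟫
      = if i = y then 1 - (Fintype.card ι : ℝ)⁻¹ else -(Fintype.card ι : ℝ)⁻¹ := by
  simp only [ansatzDirection, inner_sub_left, real_inner_smul_left, sum_inner,
    orthonormal_iff_ite.mp hs, sum_ite_eq', mem_univ, if_true]
  split_ifs <;> ring

theorem log_softmax_inner_smul_ansatzDirection {s : ι → E} (hs : Orthonormal ℝ s)
    (μ : ℝ) (y : ι) :
    log (softmax (fun i => ⟪(μ • ansatzDirection s) i, s y⟫) y)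
      = -log (1 + (Fintype.card ι - 1) * exp (-μ)) := by
  classical
  have hlogits : (fun i => ⟪(μ • ansatzDirection s) i, s y⟫)
      = fun i => if i = y then μ * (1 - (Fintype.card ι : ℝ)⁻¹)
          else μ * -(Fintype.card ι : ℝ)⁻¹ := by
    ext i
    rw [Pi.smul_apply, real_inner_smul_left, inner_ansatzDirection_left hs, mul_ite]
  rw [hlogits, softmax_ite_self, log_inv]
  ring_nf

theorem integral_log_softmax_inner_smul_ansatzDirection [MeasurableSpace E]
    {ρ : Measure E} [IsProbabilityMeasure ρ] {s : ι → E}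
    (hρ : ∀ᵐ x ∂ρ, ∀ k, ⟪x, s k⟫ = 0) (μ : ℝ) (y : ι) :
    ∫ x, log (softmax (fun i => ⟪(μ • ansatzDirection s) i, x⟫) y) ∂ρ
      = -log (Fintype.card ι) := by
  have hae : (fun x => log (softmax (fun i => ⟪(μ • ansatzDirection s) i, x⟫) y))
      =ᵐ[ρ] fun _ => -log (Fintype.card ι) := by
    filter_upwards [hρ] with x hx
    have hzero : ∀ k, ⟪s k, x⟫ = 0 := fun k => by rw [real_inner_comm, hx k]
    simp only [Pi.smul_apply, ansatzDirection, real_inner_smul_left, inner_sub_left,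
      sum_inner, hzero, sum_const_zero, mul_zero, sub_zero, softmax_const, log_inv]
  rw [integral_congr_ae hae, integral_const, probReal_univ, one_smul]

end AnsatzDirection

theorem fixed_focus_hard_attention_loss_along_ansatz_general
    (d C m : ℕ) (hC : 2 ≤ C) (hm : 2 ≤ m)
    (s : Fin C → EuclideanSpace ℝ (Fin d)) (hs : Orthonormal ℝ s)
    (ρ : Measure (EuclideanSpace ℝ (Fin d))) [IsProbabilityMeasure ρ]
    (hρ_orth : ∀ᵐ x ∂ρ, ∀ k, ⟪x, s k⟫ = 0)
    (α : ℝ)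
    (D : Fin C → EuclideanSpace ℝ (Fin d))
    (hD : ∀ k, D k = s k - (C : ℝ)⁻¹ • ∑ k', s k')
    (L : (Fin C → EuclideanSpace ℝ (Fin d)) → ℝ)
    (hL : ∀ W, L W = (C : ℝ)⁻¹ * ∑ y : Fin C,
      (-(α * Real.log (softmax (fun i => ⟪W i, s y⟫) y))
        - ((1 - α) / ((m : ℝ) - 1)) * ∑ _j : Fin (m - 1),
            ∫ b, Real.log (softmax (fun i => ⟪W i, b⟫) y) ∂ρ)) :
    (∀ μ : ℝ, L (μ • D)
        = α * Real.log (1 + (C - 1) * Real.exp (-μ)) + (1 - α) * Real.log C) ∧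
    Tendsto (fun μ : ℝ => L (μ • D)) atTop (nhds ((1 - α) * Real.log C)) ∧
    (α < 1 → 0 < (1 - α) * Real.log C) := by
  have hC0 : (C : ℝ) ≠ 0 := Nat.cast_ne_zero.mpr (by omega)
  have hm1 : (m : ℝ) - 1 ≠ 0 := by
    rw [sub_ne_zero, Nat.cast_ne_one]
    omega
  have hD' : D = ansatzDirection s := funext fun k => by
    rw [hD, ansatzDirection, Fintype.card_fin]
  have hloss : ∀ μ : ℝ, L (μ • D)
      = α * log (1 + (C - 1) * exp (-μ)) + (1 - α) * log C := by
    intro μ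
    rw [hL, hD']
    simp only [log_softmax_inner_smul_ansatzDirection hs,
      integral_log_softmax_inner_smul_ansatzDirection hρ_orth, Fintype.card_fin, sum_const,
      card_univ, nsmul_eq_mul, Nat.cast_pred (by omega : 0 < m)]
    field_simp
    ring
  refine ⟨hloss, ?_, fun hα => mul_pos (by linarith) (log_pos (by exact_mod_cast hC))⟩
  simpa [hloss] using
    ((tendsto_log_one_add_mul_exp_neg (C - 1)).const_mul α).add_const ((1 - α) * log C)

/-- in the linear-orthogonal setting, along the ansatz direction `D` the
fixed-focus hard-attention population loss equals `α log(1+(C−1)exp(−μ)) + (1−α) log C`;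
as `μ → ∞` it tends to `(1−α) log C`, which is strictly positive whenever `α < 1`. -/
theorem fixed_focus_hard_attention_loss_along_ansatz
    (d C m : ℕ) (hd : 1 ≤ d) (hC : 2 ≤ C) (hm : 2 ≤ m)
    (s : Fin C → EuclideanSpace ℝ (Fin d)) (hs : Orthonormal ℝ s)
    (ρ : Measure (EuclideanSpace ℝ (Fin d))) [IsProbabilityMeasure ρ]
    (hρ_int : Integrable (fun x => x) ρ)
    (hρ_mean : ∫ x, x ∂ρ = 0)
    (hρ_orth : ∀ᵐ x ∂ρ, ∀ k, ⟪x, s k⟫ = 0)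
    (α : ℝ) (hα : α ∈ Set.Icc (0 : ℝ) 1)
    (D : Fin C → EuclideanSpace ℝ (Fin d))
    (hD : ∀ k, D k = s k - (C : ℝ)⁻¹ • ∑ k', s k')
    (L : (Fin C → EuclideanSpace ℝ (Fin d)) → ℝ)
    (hL : ∀ W, L W = (C : ℝ)⁻¹ * ∑ y : Fin C,
      (-(α * Real.log (softmax (fun i => ⟪W i, s y⟫) y))
        - ((1 - α) / ((m : ℝ) - 1)) * ∑ _j : Fin (m - 1),
            ∫ b, Real.log (softmax (fun i => ⟪W i, b⟫) y) ∂ρ)) :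
    (∀ μ : ℝ, L (μ • D)
        = α * Real.log (1 + (C - 1) * Real.exp (-μ)) + (1 - α) * Real.log C) ∧
    Tendsto (fun μ : ℝ => L (μ • D)) atTop (nhds ((1 - α) * Real.log C)) ∧
    (α < 1 → 0 < (1 - α) * Real.log C) :=
  fixed_focus_hard_attention_loss_along_ansatz_general d C m hC hm s hs ρ hρ_orth α D hD L hL
end
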